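/- arXiv:1308.0715 — 2 statements merged into one kernel-verified Lean document; each statement's English description precedes it below -/
import Mathlib

section
/- Let V be a finite-dimensional vector space over a field E of characteristic 0, W a finite increasing filtration on V, and N : V → V a nilpotent E-linear map with N(W_w) ⊆ W_w for all w. If W' and W'' are both relative monodromy filtrations of N with respect to W (i.e., each satisfies: (i) N(W'_w) ⊆ W'_{w-2} for all w, and (ii) for all w ∈ ℤ and m ≥ 0, the induced map N^m : gr^{W'}_{w+m} gr^W_w → gr^{W'}_{w-m} gr^W_w is an isomorphism), then W' = W''. -/
open Submodule

/-- `W` is a finite increasing filtration on `V`. -/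
def IsFiniteIncFiltration {E V : Type*} [Field E] [AddCommGroup V] [Module E V]
    (W : ℤ → Submodule E V) : Prop :=
  Monotone W ∧ (∃ a : ℤ, ∀ w ≤ a, W w = ⊥) ∧ (∃ b : ℤ, ∀ w : ℤ, b ≤ w → W w = ⊤)

/-- `W'` is the relative monodromy filtration of `N` with respect to `W`:
`W'` is a finite increasing filtration, `N (W'_w) ⊆ W'_{w-2}`, and for all `w` and `m ≥ 0`
the map induced by `N^m` from `gr^{W'}_{w+m} gr^W_w` to `gr^{W'}_{w-m} gr^W_w` is an
isomorphism (expressed at the level of subspaces of `V`: the `k`-th piece of the filtration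
induced by `W'` on `gr^W_w` is the image of `(W' k ⊓ W w) ⊔ W (w-1)`). -/
def IsRelMonodromy {E V : Type*} [Field E] [AddCommGroup V] [Module E V]
    (N : V →ₗ[E] V) (W W' : ℤ → Submodule E V) : Prop :=
  IsFiniteIncFiltration W' ∧
  (∀ w : ℤ, (W' w).map N ≤ W' (w - 2)) ∧
  (∀ (w : ℤ) (m : ℕ),
    -- injectivity of the induced map `N^m : gr^{W'}_{w+m} gr^W_w → gr^{W'}_{w-m} gr^W_w`
    (∀ x ∈ W' (w + (m : ℤ)) ⊓ W w,
        (N ^ m) x ∈ (W' (w - (m : ℤ) - 1) ⊓ W w) ⊔ W (w - 1) →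
        x ∈ (W' (w + (m : ℤ) - 1) ⊓ W w) ⊔ W (w - 1)) ∧
    -- surjectivity of the induced map
    (∀ y ∈ W' (w - (m : ℤ)) ⊓ W w, ∃ x ∈ W' (w + (m : ℤ)) ⊓ W w,
        y - (N ^ m) x ∈ (W' (w - (m : ℤ) - 1) ⊓ W w) ⊔ W (w - 1)))

/-!
It suffices to show `M ≤ M'` for any two relative monodromy filtrations `M`, `M'`, and then to
swap their roles. One proves `M k ⊓ W w ≤ M' k` by induction on `w`; for fixed `w` the levels
`w + ℓ` and `w - ℓ - 1` are handled together, by descending induction on `ℓ`.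

* Injectivity of `N ^ ℓ` on the `gr^W_v`, `v ≤ w`, iterated down the filtration `W`, shows that
  `x ∈ W w ⊓ M' (w + ℓ)` with `N ^ ℓ x ∈ M' (w - ℓ - 1)` lies in `M' (w + ℓ - 1)`. This moves
  `M (w + ℓ - 1) ⊓ W w` into `M'`.
* Surjectivity of `N ^ ℓ : gr^M_{w+ℓ} gr^W_w → gr^M_{w-ℓ} gr^W_w` writes `x ∈ M (w - ℓ) ⊓ W w`
  as `N ^ ℓ u` plus an element of `M (w - ℓ - 1) ⊓ W w` plus one of `M (w - ℓ) ⊓ W (w - 1)`,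
  and the last one is handled by the induction on `w`.
-/

lemma Int.forall_of_forall_le_of_pred {P : ℤ → Prop} {a : ℤ} (base : ∀ w ≤ a, P w)
    (pred : ∀ w, P (w - 1) → P w) (w : ℤ) : P w := by
  obtain ⟨n, hn⟩ : ∃ n : ℕ, w ≤ a + n := ⟨(w - a).toNat, by omega⟩
  induction n generalizing w with
  | zero => exact base w (by simpa using hn)
  | succ n ih =>
    rcases le_or_gt w (a + n) with hw | hw
    · exact ih w hw
    · exact pred w (ih _ (by omega))

lemma Module.End.pow_apply_mem_of_map_le {R M : Type*} [Semiring R] [AddCommMonoid M]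
    [Module R M] {f : Module.End R M} {p : Submodule R M} (hp : p.map f ≤ p) (m : ℕ) {x : M}
    (hx : x ∈ p) : (f ^ m) x ∈ p :=
  Module.End.pow_apply_mem_of_forall_mem m (fun _ hy => hp (mem_map_of_mem hy)) x hx

section

variable {E V : Type*} [Field E] [AddCommGroup V] [Module E V]
  {N : V →ₗ[E] V} {W M M' : ℤ → Submodule E V}

namespace IsRelMonodromy

lemma pow_apply_mem (hM : IsRelMonodromy N W M) (m : ℕ) {k : ℤ} {x : V} (hx : x ∈ M k) :
    (N ^ m) x ∈ M (k - 2 * m) := by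
  induction m with
  | zero => simpa using hx
  | succ m ih =>
    rw [pow_succ', Module.End.mul_apply]
    convert hM.2.1 _ (mem_map_of_mem ih) using 2
    push_cast
    ring

lemma mem_sub_one_of_pow_apply_mem (hM : IsRelMonodromy N W M)
    (hNW : ∀ w, (W w).map N ≤ W w) {a : ℤ} (ha : ∀ w ≤ a, W w = ⊥) (v : ℤ) :
    ∀ (ℓ : ℕ), ∀ x ∈ W v, x ∈ M (v + ℓ) → (N ^ ℓ) x ∈ M (v - ℓ - 1) → x ∈ M (v + ℓ - 1) := by
  induction v using Int.forall_of_forall_le_of_pred (a := a) with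
  | base v hv =>
    intro ℓ x hxW _ _
    rw [ha v hv, mem_bot] at hxW
    simp [hxW]
  | pred v ih =>
    intro ℓ x hxW hxM hNx
    obtain ⟨y, hy, z, hzW, rfl⟩ := mem_sup.1 <| (hM.2.2 v ℓ).1 x ⟨hxM, hxW⟩
      (mem_sup_left ⟨hNx, Module.End.pow_apply_mem_of_map_le (hNW v) ℓ hxW⟩)
    have hNy : (N ^ ℓ) y ∈ M (v - ℓ - 1) := by
      convert hM.pow_apply_mem ℓ hy.1 using 2
      ring
    have hzM : z ∈ M (v + ℓ) := (add_mem_cancel_left (hM.1.1 (by omega) hy.1)).1 hxM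
    have hNz : (N ^ ℓ) z ∈ M (v - ℓ - 1) := by
      rw [map_add] at hNx
      exact (add_mem_cancel_left hNy).1 hNx
    refine add_mem hy.1 ?_
    convert ih (ℓ + 1) z hzW (by convert hzM using 2; push_cast; ring) ?_ using 2
    · push_cast; ring
    · rw [pow_succ', Module.End.mul_apply]
      convert hM.2.1 _ (mem_map_of_mem hNz) using 2
      push_cast
      ring

lemma inf_le_add_sub_one (hM : IsRelMonodromy N W M) (hM' : IsRelMonodromy N W M')
    (hNW : ∀ w, (W w).map N ≤ W w) {a : ℤ} (ha : ∀ w ≤ a, W w = ⊥) {w : ℤ} {ℓ : ℕ}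
    (hup : M (w + ℓ) ⊓ W w ≤ M' (w + ℓ)) (hlow : M (w - ℓ - 1) ⊓ W w ≤ M' (w - ℓ - 1)) :
    M (w + ℓ - 1) ⊓ W w ≤ M' (w + ℓ - 1) := by
  intro x hx
  obtain ⟨hxM, hxW⟩ := mem_inf.1 hx
  have hNx : (N ^ ℓ) x ∈ M (w - ℓ - 1) := by
    convert hM.pow_apply_mem ℓ hxM using 2
    ring
  exact hM'.mem_sub_one_of_pow_apply_mem hNW ha w ℓ x hxW (hup ⟨hM.1.1 (by omega) hxM, hxW⟩)
    (hlow ⟨hNx, Module.End.pow_apply_mem_of_map_le (hNW w) ℓ hxW⟩)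

lemma inf_le_sub (hM : IsRelMonodromy N W M) (hM' : IsRelMonodromy N W M') {w : ℤ} {ℓ : ℕ}
    (hprev : ∀ k, M k ⊓ W (w - 1) ≤ M' k)
    (hup : M (w + ℓ) ⊓ W w ≤ M' (w + ℓ)) (hlow : M (w - ℓ - 1) ⊓ W w ≤ M' (w - ℓ - 1)) :
    M (w - ℓ) ⊓ W w ≤ M' (w - ℓ) := by
  intro x hx
  obtain ⟨u, hu, hxu⟩ := (hM.2.2 w ℓ).2 x hx
  obtain ⟨y, hy, z, hzW, hyz⟩ := mem_sup.1 hxu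
  have hNu : (N ^ ℓ) u ∈ M (w - ℓ) := by
    convert hM.pow_apply_mem ℓ hu.1 using 2
    ring
  have hNu' : (N ^ ℓ) u ∈ M' (w - ℓ) := by
    convert hM'.pow_apply_mem ℓ (hup hu) using 2
    ring
  have hx_eq : x = (N ^ ℓ) u + y + z := by
    rw [add_assoc, hyz, add_sub_cancel]
  have hzM : z ∈ M (w - ℓ) := by
    rw [hx_eq, add_assoc] at hx
    exact (add_mem_cancel_left (hM.1.1 (by omega) hy.1)).1
      ((add_mem_cancel_left hNu).1 hx.1)
  rw [hx_eq]
  exact add_mem (add_mem hNu' (hM'.1.1 (by omega) (hlow hy))) (hprev _ ⟨hzM, hzW⟩)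

lemma inf_le_of_inf_pred_le (hM : IsRelMonodromy N W M) (hM' : IsRelMonodromy N W M')
    (hNW : ∀ w, (W w).map N ≤ W w) {a : ℤ} (ha : ∀ w ≤ a, W w = ⊥) {w : ℤ}
    (hprev : ∀ k, M k ⊓ W (w - 1) ≤ M' k) (k : ℤ) :
    M k ⊓ W w ≤ M' k := by
  obtain ⟨b, hb⟩ := hM'.1.2.2
  obtain ⟨c, hc⟩ := hM.1.2.1
  have key : ∀ ℓ : ℕ, M (w + ℓ) ⊓ W w ≤ M' (w + ℓ) ∧ M (w - ℓ - 1) ⊓ W w ≤ M' (w - ℓ - 1) := by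
    intro ℓ
    induction ℓ using Nat.strong_decreasing_induction with
    | base =>
      refine ⟨(b - w).toNat + (w - c).toNat, fun ℓ hℓ => ⟨?_, ?_⟩⟩
      · simp [hb (w + ℓ) (by omega)]
      · simp [hc (w - ℓ - 1) (by omega)]
    | step ℓ ih =>
      obtain ⟨hup, hlow⟩ := ih (ℓ + 1) (by omega)
      have hpred : w + ((ℓ + 1 : ℕ) : ℤ) - 1 = w + ℓ := by push_cast; ring
      have hsucc : w - ((ℓ + 1 : ℕ) : ℤ) = w - ℓ - 1 := by push_cast; ring
      constructor
      · rw [← hpred]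
        exact hM.inf_le_add_sub_one hM' hNW ha hup hlow
      · rw [← hsucc]
        exact hM.inf_le_sub hM' hprev hup hlow
  rcases le_or_gt w k with hk | hk
  · obtain ⟨ℓ, rfl⟩ : ∃ ℓ : ℕ, k = w + ℓ := ⟨(k - w).toNat, by omega⟩
    exact (key ℓ).1
  · obtain ⟨ℓ, rfl⟩ : ∃ ℓ : ℕ, k = w - ℓ - 1 := ⟨(w - k - 1).toNat, by omega⟩
    exact (key ℓ).2

lemma le (hM : IsRelMonodromy N W M) (hM' : IsRelMonodromy N W M') (hW : IsFiniteIncFiltration W)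
    (hNW : ∀ w, (W w).map N ≤ W w) : M ≤ M' := by
  obtain ⟨-, ⟨a, ha⟩, ⟨b, hb⟩⟩ := hW
  have hinf : ∀ w k, M k ⊓ W w ≤ M' k := by
    intro w
    induction w using Int.forall_of_forall_le_of_pred (a := a) with
    | base w hw => simp [ha w hw]
    | pred w ih => exact hM.inf_le_of_inf_pred_le hM' hNW ha ih
  intro k
  simpa [hb b le_rfl] using hinf b k

end IsRelMonodromy

end

theorem relative_monodromy_filtration_unique_general
    {E V : Type*} [Field E] [AddCommGroup V] [Module E V]
    (W W' W'' : ℤ → Submodule E V) (N : V →ₗ[E] V)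
    (hW : IsFiniteIncFiltration W) (hNW : ∀ w : ℤ, (W w).map N ≤ W w)
    (h' : IsRelMonodromy N W W') (h'' : IsRelMonodromy N W W'') :
    W' = W'' :=
  le_antisymm (h'.le h'' hW hNW) (h''.le h' hW hNW)

/-- Deligne's uniqueness of the relative monodromy filtration. -/
theorem relative_monodromy_filtration_unique
    {E V : Type*} [Field E] [CharZero E] [AddCommGroup V] [Module E V]
    [FiniteDimensional E V]
    (W W' W'' : ℤ → Submodule E V) (N : V →ₗ[E] V)
    (hW : IsFiniteIncFiltration W) (hN : IsNilpotent N) (hNW : ∀ w : ℤ, (W w).map N ≤ W w)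
    (h' : IsRelMonodromy N W W') (h'' : IsRelMonodromy N W W'') :
    W' = W'' :=
  relative_monodromy_filtration_unique_general W W' W'' N hW hNW h' h''
end

section
/- Let V be a finite-dimensional real vector space, α a 𝔾_m-action on V (a ℤ-grading V = ⊕_w V_w), and for w ∈ ℤ let V_w be the weight-w part. Define a decreasing filtration F on V_ℂ^{⊕2} as the direct sum over w of: for w = 2r even, F^r = (V_w)_ℂ^{⊕2}, F^{r+1} = 0; for w = 2r+1 odd, F^r = (V_w)_ℂ^{⊕2}, F^{r+2} = 0, and F^{r+1} the ℂ-span of {(i ⊗ x, 1 ⊗ x) : x ∈ V_w}. Let W' be the filtration on V with W'_w = ⊕_{k ≤ w} V_k. Then (V^{⊕2}, W'^{⊕2}, F) is a mixed ℝ-Hodge structure, i.e., F induces a pure Hodge structure of weight w on each gr^{W'^{⊕2}}_w ≅ V_w^{⊕2}. -/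
/-! Both the Hodge filtration `F` and the weight filtration are split by the grading, so
`(F^p ∩ W_w) + W_{w-1} = F^p(V_w^{⊕2}) + W_{w-1}`, and the claim reduces to the weight-`w`
summand alone. There one of `F^p`, `conj F^{w+1-p}` is everything and the other is zero, except
in the middle of odd weight, where `F^p = {(i u, u)}` and its conjugate is `{(-i u, u)}`; these
graphs are complementary because `i ≠ -i`. -/

open Submodule
open scoped TensorProduct

/-- Complex conjugation on the complexification `ℂ ⊗[ℝ] V` of a real vector space. -/
noncomputable def conjTensor (V : Type*) [AddCommGroup V] [Module ℝ V] :
    (ℂ ⊗[ℝ] V) →ₛₗ[starRingEnd ℂ] (ℂ ⊗[ℝ] V) where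
  toFun := TensorProduct.map (Complex.conjAe.toLinearMap) LinearMap.id
  map_add' x y := map_add _ x y
  map_smul' c x := by
    try simp only [RingHom.id_apply]
    induction x using TensorProduct.induction_on with
    | zero => simp
    | tmul a v => simp [TensorProduct.smul_tmul', smul_eq_mul]
    | add x y hx hy =>
        simp only [smul_add, map_add] at *
        rw [hx, hy]

/-- Complex conjugation on the complexification `(ℂ ⊗[ℝ] V)²` of `V ⊕ V`. -/
noncomputable def conjTensor₂ (V : Type*) [AddCommGroup V] [Module ℝ V] :
    ((ℂ ⊗[ℝ] V) × (ℂ ⊗[ℝ] V)) →ₛₗ[starRingEnd ℂ] ((ℂ ⊗[ℝ] V) × (ℂ ⊗[ℝ] V)) where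
  toFun v := (conjTensor V v.1, conjTensor V v.2)
  map_add' v w := by simp [Prod.ext_iff]
  map_smul' c v := by simp [Prod.ext_iff, map_smulₛₗ]

/-- The Hodge filtration on `(V_w)_ℂ^{⊕2} ⊆ (ℂ ⊗[ℝ] V)²` attached to the weight-`w`
part `V_w` of a grading:  for `w = 2r` even, `F^r = (V_w)_ℂ^{⊕2}` and `F^{r+1} = 0`;
for `w = 2r+1` odd, `F^r = (V_w)_ℂ^{⊕2}`, `F^{r+2} = 0`, and `F^{r+1}` is the ℂ-span
of the vectors `(i ⊗ x, 1 ⊗ x)`, `x ∈ V_w`. -/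
noncomputable def hodgePiece {V : Type*} [AddCommGroup V] [Module ℝ V]
    (Vg : ℤ → Submodule ℝ V) (w p : ℤ) : Submodule ℂ ((ℂ ⊗[ℝ] V) × (ℂ ⊗[ℝ] V)) :=
  if 2 * p ≤ w then ((Vg w).baseChange ℂ).prod ((Vg w).baseChange ℂ)
  else if w % 2 = 1 ∧ 2 * p = w + 1 then
    Submodule.span ℂ {v : (ℂ ⊗[ℝ] V) × (ℂ ⊗[ℝ] V) |
      ∃ x ∈ Vg w, v = (Complex.I • ((1 : ℂ) ⊗ₜ[ℝ] x), (1 : ℂ) ⊗ₜ[ℝ] x)}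
  else ⊥

theorem sup_inf_sup_eq_inf_sup_of_disjoint {α : Type*} [Lattice α] [OrderBot α]
    [IsModularLattice α] {x y z d : α} (hx : x ≤ d) (hy : y ≤ d) (hzd : Disjoint z d) :
    (x ⊔ z) ⊓ (y ⊔ z) = x ⊓ y ⊔ z := by
  have hyz : d ⊓ (y ⊔ z) = y := by
    rw [inf_comm, sup_inf_assoc_of_le z hy, hzd.eq_bot, sup_bot_eq]
  calc (x ⊔ z) ⊓ (y ⊔ z) = z ⊔ x ⊓ (y ⊔ z) := by
        rw [sup_comm, sup_inf_assoc_of_le x le_sup_right]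
    _ = z ⊔ x ⊓ (d ⊓ (y ⊔ z)) := by rw [← inf_assoc, inf_eq_left.mpr hx]
    _ = z ⊔ x ⊓ y := by rw [hyz]
    _ = x ⊓ y ⊔ z := sup_comm _ _

theorem biSup_le_eq_biSup_le_sub_one_sup {α : Type*} [CompleteLattice α] (f : ℤ → α)
    (w : ℤ) :
    ⨆ k ≤ w, f k = (⨆ k ≤ w - 1, f k) ⊔ f w := by
  simp_rw [Int.le_sub_one_iff]
  exact biSup_le_eq_sup (f := f) w

namespace Submodule

theorem disjoint_prod_prod {R M N : Type*} [Semiring R] [AddCommMonoid M] [Module R M]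
    [AddCommMonoid N] [Module R N] {p p' : Submodule R M} {q q' : Submodule R N}
    (hp : Disjoint p p') (hq : Disjoint q q') : Disjoint (p.prod q) (p'.prod q') := by
  rw [disjoint_iff, prod_inf_prod, hp.eq_bot, hq.eq_bot, prod_bot]

variable {K M : Type*} [Field K] [AddCommGroup M] [Module K M]

def smulGraph (U : Submodule K M) (c : K) : Submodule K (M × M) :=
  U.map ((c • LinearMap.id).prod LinearMap.id)

variable (U : Submodule K M) {c d : K}

theorem mem_smulGraph {x : M × M} : x ∈ U.smulGraph c ↔ ∃ u ∈ U, (c • u, u) = x := by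
  simp [smulGraph]

theorem smulGraph_le_prod (c : K) : U.smulGraph c ≤ U.prod U := by
  intro x hx
  obtain ⟨u, hu, rfl⟩ := U.mem_smulGraph.mp hx
  exact ⟨U.smul_mem c hu, hu⟩

theorem smulGraph_sup_smulGraph (hcd : c ≠ d) : U.smulGraph c ⊔ U.smulGraph d = U.prod U := by
  refine le_antisymm (sup_le (U.smulGraph_le_prod c) (U.smulGraph_le_prod d)) ?_
  rintro ⟨a, b⟩ ⟨ha, hb⟩
  have hcd' : c - d ≠ 0 := sub_ne_zero.mpr hcd
  have hu : (c - d)⁻¹ • (a - d • b) ∈ U := U.smul_mem _ (U.sub_mem ha (U.smul_mem d hb))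
  have hv : (c - d)⁻¹ • (c • b - a) ∈ U := U.smul_mem _ (U.sub_mem (U.smul_mem c hb) ha)
  refine mem_sup.mpr ⟨_, U.mem_smulGraph.mpr ⟨_, hu, rfl⟩, _,
    U.mem_smulGraph.mpr ⟨_, hv, rfl⟩, Prod.ext ?_ ?_⟩
  · show c • (c - d)⁻¹ • (a - d • b) + d • (c - d)⁻¹ • (c • b - a) = a
    rw [smul_comm c, smul_comm d, ← smul_add,
      show c • (a - d • b) + d • (c • b - a) = (c - d) • a by module,
      inv_smul_smul₀ hcd']
  · show (c - d)⁻¹ • (a - d • b) + (c - d)⁻¹ • (c • b - a) = b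
    rw [← smul_add, show a - d • b + (c • b - a) = (c - d) • b by module,
      inv_smul_smul₀ hcd']

theorem disjoint_smulGraph (hcd : c ≠ d) : Disjoint (U.smulGraph c) (U.smulGraph d) := by
  rw [disjoint_def]
  intro x hc hd
  obtain ⟨u, -, rfl⟩ := U.mem_smulGraph.mp hc
  obtain ⟨v, -, hvu⟩ := U.mem_smulGraph.mp hd
  obtain ⟨hdc, rfl⟩ := Prod.mk.inj hvu
  have hv : (c - d) • v = 0 := by rw [sub_smul, ← hdc, sub_self]
  simp [(smul_eq_zero.mp hv).resolve_left (sub_ne_zero.mpr hcd)]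

end Submodule

section Conjugation

variable {V : Type*} [AddCommGroup V] [Module ℝ V]

@[simp]
theorem conjTensor_tmul (c : ℂ) (x : V) :
    conjTensor V (c ⊗ₜ[ℝ] x) = starRingEnd ℂ c ⊗ₜ[ℝ] x := by
  simp [conjTensor]

theorem conjTensor_conjTensor (x : ℂ ⊗[ℝ] V) : conjTensor V (conjTensor V x) = x := by
  induction x using TensorProduct.induction_on with
  | zero => simp
  | tmul a v => simp
  | add x y hx hy => rw [map_add, map_add, hx, hy]

theorem map_conjTensor_baseChange (p : Submodule ℝ V) :
    (p.baseChange ℂ).map (conjTensor V) = p.baseChange ℂ := by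
  have hle : (p.baseChange ℂ).map (conjTensor V) ≤ p.baseChange ℂ := by
    rintro _ ⟨_, hy, rfl⟩
    rw [baseChange_eq_span] at hy ⊢
    induction hy using span_induction with
    | mem _ h => obtain ⟨x, hx, rfl⟩ := h; exact subset_span ⟨x, hx, by simp⟩
    | zero => simp
    | add _ _ _ _ h h' => rw [map_add]; exact add_mem h h'
    | smul a _ _ h => rw [map_smulₛₗ]; exact smul_mem _ _ h
  exact le_antisymm hle fun x hx =>
    ⟨conjTensor V x, hle ⟨x, hx, rfl⟩, conjTensor_conjTensor x⟩

theorem map_conjTensor₂_prod (p q : Submodule ℂ (ℂ ⊗[ℝ] V)) :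
    (p.prod q).map (conjTensor₂ V) = (p.map (conjTensor V)).prod (q.map (conjTensor V)) := by
  apply le_antisymm
  · rintro _ ⟨⟨a, b⟩, ⟨ha, hb⟩, rfl⟩
    exact ⟨⟨a, ha, rfl⟩, ⟨b, hb, rfl⟩⟩
  · rintro ⟨_, _⟩ ⟨⟨a, ha, rfl⟩, ⟨b, hb, rfl⟩⟩
    exact ⟨(a, b), ⟨ha, hb⟩, rfl⟩

theorem map_conjTensor₂_smulGraph (U : Submodule ℂ (ℂ ⊗[ℝ] V)) (c : ℂ) :
    (U.smulGraph c).map (conjTensor₂ V) =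
      (U.map (conjTensor V)).smulGraph (starRingEnd ℂ c) := by
  ext x
  simp only [mem_map, mem_smulGraph]
  constructor
  · rintro ⟨_, ⟨u, hu, rfl⟩, rfl⟩
    exact ⟨conjTensor V u, ⟨u, hu, rfl⟩, by simp [conjTensor₂]⟩
  · rintro ⟨_, ⟨u, hu, rfl⟩, rfl⟩
    exact ⟨(c • u, u), ⟨u, hu, rfl⟩, by simp [conjTensor₂]⟩

end Conjugation

section HodgePiece

variable {V : Type*} [AddCommGroup V] [Module ℝ V] (Vg : ℤ → Submodule ℝ V) {w p : ℤ}

theorem hodgePiece_of_two_mul_le (h : 2 * p ≤ w) :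
    hodgePiece Vg w p = ((Vg w).baseChange ℂ).prod ((Vg w).baseChange ℂ) :=
  if_pos h

theorem hodgePiece_of_lt_two_mul (h : w + 1 < 2 * p) : hodgePiece Vg w p = ⊥ := by
  rw [hodgePiece, if_neg (by omega), if_neg (by omega)]

theorem hodgePiece_of_two_mul_eq (h : 2 * p = w + 1) :
    hodgePiece Vg w p = ((Vg w).baseChange ℂ).smulGraph Complex.I := by
  rw [hodgePiece, if_neg (by omega), if_pos ⟨by omega, h⟩, smulGraph, baseChange_eq_span,
    map_span, map_coe, ← Set.image_comp]
  congr 1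
  ext v
  simp [eq_comm]

variable (w p)

theorem hodgePiece_le_prod :
    hodgePiece Vg w p ≤ ((Vg w).baseChange ℂ).prod ((Vg w).baseChange ℂ) := by
  rcases lt_trichotomy (2 * p) (w + 1) with h | h | h
  · exact (hodgePiece_of_two_mul_le Vg (by omega)).le
  · exact (hodgePiece_of_two_mul_eq Vg h).trans_le (smulGraph_le_prod _ _)
  · exact (hodgePiece_of_lt_two_mul Vg h).trans_le bot_le

theorem hodgePiece_sup_map_conjTensor₂_and_disjoint :
    hodgePiece Vg w p ⊔ (hodgePiece Vg w (w + 1 - p)).map (conjTensor₂ V) =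
        ((Vg w).baseChange ℂ).prod ((Vg w).baseChange ℂ) ∧
      Disjoint (hodgePiece Vg w p) ((hodgePiece Vg w (w + 1 - p)).map (conjTensor₂ V)) := by
  rcases lt_trichotomy (2 * p) (w + 1) with h | h | h
  · rw [hodgePiece_of_two_mul_le Vg (by omega), hodgePiece_of_lt_two_mul Vg (by omega),
      Submodule.map_bot]
    exact ⟨sup_bot_eq _, disjoint_bot_right⟩
  · rw [show w + 1 - p = p by omega, hodgePiece_of_two_mul_eq Vg h, map_conjTensor₂_smulGraph,
      map_conjTensor_baseChange, Complex.conj_I]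
    have hI : Complex.I ≠ -Complex.I := fun h => Complex.I_ne_zero (self_eq_neg.mp h)
    exact ⟨smulGraph_sup_smulGraph _ hI, disjoint_smulGraph _ hI⟩
  · rw [hodgePiece_of_lt_two_mul Vg h, hodgePiece_of_two_mul_le Vg (by omega),
      map_conjTensor₂_prod, map_conjTensor_baseChange]
    exact ⟨bot_sup_eq _, disjoint_bot_left⟩

end HodgePiece

section Filtrations

variable {V : Type*} [AddCommGroup V] [Module ℝ V] (Vg : ℤ → Submodule ℝ V)

noncomputable def weightFiltration (w : ℤ) :
    Submodule ℂ ((ℂ ⊗[ℝ] V) × (ℂ ⊗[ℝ] V)) :=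
  (⨆ k ≤ w, (Vg k).baseChange ℂ).prod (⨆ k ≤ w, (Vg k).baseChange ℂ)

noncomputable def hodgeFiltration (p : ℤ) :
    Submodule ℂ ((ℂ ⊗[ℝ] V) × (ℂ ⊗[ℝ] V)) :=
  ⨆ q, hodgePiece Vg q p

theorem map_conjTensor₂_weightFiltration (w : ℤ) :
    (weightFiltration Vg w).map (conjTensor₂ V) = weightFiltration Vg w := by
  simp only [weightFiltration, map_conjTensor₂_prod, Submodule.map_iSup,
    map_conjTensor_baseChange]

theorem weightFiltration_eq_sub_one_sup (w : ℤ) :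
    weightFiltration Vg w =
      weightFiltration Vg (w - 1) ⊔ ((Vg w).baseChange ℂ).prod ((Vg w).baseChange ℂ) := by
  rw [weightFiltration, weightFiltration, prod_sup_prod,
    biSup_le_eq_biSup_le_sub_one_sup (fun k => (Vg k).baseChange ℂ) w]

theorem hodgePiece_le_weightFiltration {q w : ℤ} (p : ℤ) (hq : q ≤ w) :
    hodgePiece Vg q p ≤ weightFiltration Vg w :=
  (hodgePiece_le_prod Vg q p).trans <|
    prod_mono (le_iSup₂ (f := fun k (_ : k ≤ w) => (Vg k).baseChange ℂ) q hq)
      (le_iSup₂ (f := fun k (_ : k ≤ w) => (Vg k).baseChange ℂ) q hq)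

variable {Vg}

theorem disjoint_weightFiltration_sub_one (hgr : DirectSum.IsInternal Vg) (w : ℤ) :
    Disjoint (weightFiltration Vg (w - 1))
      (((Vg w).baseChange ℂ).prod ((Vg w).baseChange ℂ)) := by
  have h := (hgr.baseChange (S := ℂ)).submodule_iSupIndep.disjoint_biSup
    (y := Set.Iic (w - 1)) (x := w) (by simp)
  exact disjoint_prod_prod h.symm h.symm

theorem disjoint_iSup_hodgePiece_above_weightFiltration (hgr : DirectSum.IsInternal Vg)
    (w p : ℤ) :
    Disjoint (⨆ q, ⨆ _ : ¬q ≤ w, hodgePiece Vg q p) (weightFiltration Vg w) := by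
  have h := (hgr.baseChange (S := ℂ)).submodule_iSupIndep.disjoint_biSup_biSup
    (s := {k | ¬k ≤ w}) (t := Set.Iic w) (Set.disjoint_left.mpr fun _ h h' => h h')
  refine (disjoint_prod_prod h h).mono_left
    (iSup₂_le fun q hq => (hodgePiece_le_prod Vg q p).trans ?_)
  exact prod_mono (le_iSup₂ (f := fun k (_ : ¬k ≤ w) => (Vg k).baseChange ℂ) q hq)
    (le_iSup₂ (f := fun k (_ : ¬k ≤ w) => (Vg k).baseChange ℂ) q hq)

theorem hodgeFiltration_inf_weightFiltration_sup (hgr : DirectSum.IsInternal Vg) (w p : ℤ) :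
    hodgeFiltration Vg p ⊓ weightFiltration Vg w ⊔ weightFiltration Vg (w - 1) =
      hodgePiece Vg w p ⊔ weightFiltration Vg (w - 1) := by
  have hle : ∀ w', ⨆ q, ⨆ _ : q ≤ w', hodgePiece Vg q p ≤ weightFiltration Vg w' :=
    fun _ => iSup₂_le fun q hq => hodgePiece_le_weightFiltration Vg p hq
  rw [hodgeFiltration, iSup_split _ (· ≤ w), sup_inf_assoc_of_le _ (hle w),
    (disjoint_iSup_hodgePiece_above_weightFiltration hgr w p).eq_bot, sup_bot_eq,
    biSup_le_eq_biSup_le_sub_one_sup (fun q => hodgePiece Vg q p) w, sup_comm (⨆ q ≤ w - 1, _),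
    sup_assoc, sup_eq_right.mpr (hle (w - 1))]

end Filtrations

theorem deligne_to_hodge_functor_is_MHS_general
    {V : Type*} [AddCommGroup V] [Module ℝ V]
    (Vg : ℤ → Submodule ℝ V) (hgr : DirectSum.IsInternal Vg) :
    ∀ w p : ℤ,
      -- the complexified weight filtration `W` of `W'^{⊕2}` on `(ℂ ⊗[ℝ] V)²`
      (((⨆ q : ℤ, hodgePiece Vg q p) ⊓
          ((⨆ k : ℤ, ⨆ _ : k ≤ w, (Vg k).baseChange ℂ).prod
            (⨆ k : ℤ, ⨆ _ : k ≤ w, (Vg k).baseChange ℂ))) ⊔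
        ((⨆ k : ℤ, ⨆ _ : k ≤ w - 1, (Vg k).baseChange ℂ).prod
            (⨆ k : ℤ, ⨆ _ : k ≤ w - 1, (Vg k).baseChange ℂ))) ⊔
      ((((⨆ q : ℤ, hodgePiece Vg q (w + 1 - p)) ⊓
          ((⨆ k : ℤ, ⨆ _ : k ≤ w, (Vg k).baseChange ℂ).prod
            (⨆ k : ℤ, ⨆ _ : k ≤ w, (Vg k).baseChange ℂ))) ⊔
        ((⨆ k : ℤ, ⨆ _ : k ≤ w - 1, (Vg k).baseChange ℂ).prod
            (⨆ k : ℤ, ⨆ _ : k ≤ w - 1, (Vg k).baseChange ℂ))).map (conjTensor₂ V)) =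
        ((⨆ k : ℤ, ⨆ _ : k ≤ w, (Vg k).baseChange ℂ).prod
            (⨆ k : ℤ, ⨆ _ : k ≤ w, (Vg k).baseChange ℂ)) ∧
      ((((⨆ q : ℤ, hodgePiece Vg q p) ⊓
          ((⨆ k : ℤ, ⨆ _ : k ≤ w, (Vg k).baseChange ℂ).prod
            (⨆ k : ℤ, ⨆ _ : k ≤ w, (Vg k).baseChange ℂ))) ⊔
        ((⨆ k : ℤ, ⨆ _ : k ≤ w - 1, (Vg k).baseChange ℂ).prod
            (⨆ k : ℤ, ⨆ _ : k ≤ w - 1, (Vg k).baseChange ℂ))) ⊓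
      ((((⨆ q : ℤ, hodgePiece Vg q (w + 1 - p)) ⊓
          ((⨆ k : ℤ, ⨆ _ : k ≤ w, (Vg k).baseChange ℂ).prod
            (⨆ k : ℤ, ⨆ _ : k ≤ w, (Vg k).baseChange ℂ))) ⊔
        ((⨆ k : ℤ, ⨆ _ : k ≤ w - 1, (Vg k).baseChange ℂ).prod
            (⨆ k : ℤ, ⨆ _ : k ≤ w - 1, (Vg k).baseChange ℂ))).map (conjTensor₂ V))) ≤
        ((⨆ k : ℤ, ⨆ _ : k ≤ w - 1, (Vg k).baseChange ℂ).prod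
            (⨆ k : ℤ, ⨆ _ : k ≤ w - 1, (Vg k).baseChange ℂ)) := by
  intro w p
  change hodgeFiltration Vg p ⊓ weightFiltration Vg w ⊔ weightFiltration Vg (w - 1) ⊔
      (hodgeFiltration Vg (w + 1 - p) ⊓ weightFiltration Vg w ⊔
        weightFiltration Vg (w - 1)).map (conjTensor₂ V) = weightFiltration Vg w ∧
    (hodgeFiltration Vg p ⊓ weightFiltration Vg w ⊔ weightFiltration Vg (w - 1)) ⊓
      (hodgeFiltration Vg (w + 1 - p) ⊓ weightFiltration Vg w ⊔
        weightFiltration Vg (w - 1)).map (conjTensor₂ V) ≤ weightFiltration Vg (w - 1)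
  rw [hodgeFiltration_inf_weightFiltration_sup hgr, hodgeFiltration_inf_weightFiltration_sup hgr,
    Submodule.map_sup, map_conjTensor₂_weightFiltration, weightFiltration_eq_sub_one_sup Vg w]
  obtain ⟨hsup, hdisj⟩ := hodgePiece_sup_map_conjTensor₂_and_disjoint Vg w p
  refine ⟨by rw [← sup_sup_distrib_right, hsup, sup_comm], ?_⟩
  rw [sup_inf_sup_eq_inf_sup_of_disjoint (hodgePiece_le_prod Vg w p) (le_sup_right.trans hsup.le)
    (disjoint_weightFiltration_sub_one hgr w), hdisj.eq_bot, bot_sup_eq]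

/-- Given a real vector space `V` with a `𝔾_m`-action (a grading `V = ⊕_w V_w`), the
filtration `F = ⊕_w F(V_w^{⊕2})` of Section 2.3 of the paper together with the weight
filtration `W'_w = ⊕_{k ≤ w} V_k` makes `(V^{⊕2}, W'^{⊕2}, F)` a mixed ℝ-Hodge
structure:  for every `w` and `p`, `F` induces on `gr^{W'}_w ≅ V_w^{⊕2}` a pure Hodge
structure of weight `w`, i.e. `gr_w = F^p(gr_w) ⊕ conj(F^{w+1-p}(gr_w))`
(sup is everything and intersection vanishes, modulo `W'_{w-1}`). -/
theorem deligne_to_hodge_functor_is_MHS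
    {V : Type*} [AddCommGroup V] [Module ℝ V] [FiniteDimensional ℝ V]
    (Vg : ℤ → Submodule ℝ V) (hgr : DirectSum.IsInternal Vg) :
    ∀ w p : ℤ,
      -- the complexified weight filtration `W` of `W'^{⊕2}` on `(ℂ ⊗[ℝ] V)²`
      (((⨆ q : ℤ, hodgePiece Vg q p) ⊓
          ((⨆ k : ℤ, ⨆ _ : k ≤ w, (Vg k).baseChange ℂ).prod
            (⨆ k : ℤ, ⨆ _ : k ≤ w, (Vg k).baseChange ℂ))) ⊔
        ((⨆ k : ℤ, ⨆ _ : k ≤ w - 1, (Vg k).baseChange ℂ).prod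
            (⨆ k : ℤ, ⨆ _ : k ≤ w - 1, (Vg k).baseChange ℂ))) ⊔
      ((((⨆ q : ℤ, hodgePiece Vg q (w + 1 - p)) ⊓
          ((⨆ k : ℤ, ⨆ _ : k ≤ w, (Vg k).baseChange ℂ).prod
            (⨆ k : ℤ, ⨆ _ : k ≤ w, (Vg k).baseChange ℂ))) ⊔
        ((⨆ k : ℤ, ⨆ _ : k ≤ w - 1, (Vg k).baseChange ℂ).prod
            (⨆ k : ℤ, ⨆ _ : k ≤ w - 1, (Vg k).baseChange ℂ))).map (conjTensor₂ V)) =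
        ((⨆ k : ℤ, ⨆ _ : k ≤ w, (Vg k).baseChange ℂ).prod
            (⨆ k : ℤ, ⨆ _ : k ≤ w, (Vg k).baseChange ℂ)) ∧
      ((((⨆ q : ℤ, hodgePiece Vg q p) ⊓
          ((⨆ k : ℤ, ⨆ _ : k ≤ w, (Vg k).baseChange ℂ).prod
            (⨆ k : ℤ, ⨆ _ : k ≤ w, (Vg k).baseChange ℂ))) ⊔
        ((⨆ k : ℤ, ⨆ _ : k ≤ w - 1, (Vg k).baseChange ℂ).prod
            (⨆ k : ℤ, ⨆ _ : k ≤ w - 1, (Vg k).baseChange ℂ))) ⊓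
      ((((⨆ q : ℤ, hodgePiece Vg q (w + 1 - p)) ⊓
          ((⨆ k : ℤ, ⨆ _ : k ≤ w, (Vg k).baseChange ℂ).prod
            (⨆ k : ℤ, ⨆ _ : k ≤ w, (Vg k).baseChange ℂ))) ⊔
        ((⨆ k : ℤ, ⨆ _ : k ≤ w - 1, (Vg k).baseChange ℂ).prod
            (⨆ k : ℤ, ⨆ _ : k ≤ w - 1, (Vg k).baseChange ℂ))).map (conjTensor₂ V))) ≤
        ((⨆ k : ℤ, ⨆ _ : k ≤ w - 1, (Vg k).baseChange ℂ).prod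
            (⨆ k : ℤ, ⨆ _ : k ≤ w - 1, (Vg k).baseChange ℂ)) :=
  deligne_to_hodge_functor_is_MHS_general Vg hgr
end
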